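/- arXiv:1312.5085 — 5 statements merged into one kernel-verified Lean document; each statement's English description precedes it below -/
import Mathlib

section
/- Let g_j, g_k, g_h be vectors in (Z_4)^n each having at least one odd entry, such that no one of them is a Z_4-scalar multiple of another (in particular they are distinct). Define α(g) = 1 if g ≡ 0 (mod 4) and α(g) = 0 otherwise, and β_{jkh} = α(g_j+g_k+g_h) + α(g_j+g_k-g_h) + α(g_j-g_k+g_h) + α(g_j-g_k-g_h). Then β_{jkh} ∈ {0, 1}. -/
open Complex Finset

noncomputable def ipow (a : ZMod 4) : ℂ := Complex.I ^ a.val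

def isOddZ4 (a : ZMod 4) : Prop := a = 1 ∨ a = 3

instance : DecidablePred isOddZ4 := fun a => by unfold isOddZ4; infer_instance

/-- `g` has an odd entry and its first (lowest-index) odd entry equals 1. -/
def inOmega {n : ℕ} (g : Fin n → ZMod 4) : Prop :=
  ∃ i : Fin n, g i = 1 ∧ ∀ j : Fin n, j < i → ¬ isOddZ4 (g j)

instance {n : ℕ} : DecidablePred (inOmega (n := n)) := fun g => by
  unfold inOmega; infer_instance

def allEven {n : ℕ} (u : Fin n → ZMod 4) : Prop := ∀ i, u i = 0 ∨ u i = 2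

instance {n : ℕ} : DecidablePred (allEven (n := n)) := fun u => by
  unfold allEven; infer_instance

def dot4 {n : ℕ} (u w : Fin n → ZMod 4) : ZMod 4 := ∑ i, u i * w i

def alpha4 {n : ℕ} (g : Fin n → ZMod 4) : ℕ := if g = 0 then 1 else 0

def beta4 {n : ℕ} (a b c : Fin n → ZMod 4) : ℕ :=
  alpha4 (a + b + c) + alpha4 (a + b - c) + alpha4 (a - b + c) + alpha4 (a - b - c)

/- For any two of the four vectors `gj ± gk ± gh`, their sum or their difference is twice one of
`gj`, `gk`, `gh`. In `ZMod 4` doubling kills only even entries, so no two of them vanish together. -/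

lemma allEven_of_add_self_eq_zero {n : ℕ} {x : Fin n → ZMod 4} (h : x + x = 0) : allEven x :=
  fun i => (by decide : ∀ a : ZMod 4, a + a = 0 → a = 0 ∨ a = 2) _ (congrFun h i)

lemma alpha4_add_alpha4_le_one {n : ℕ} {u v x : Fin n → ZMod 4} (hx : ¬ allEven x)
    (h : x + x = u + v ∨ x + x = u - v) : alpha4 u + alpha4 v ≤ 1 := by
  unfold alpha4
  split_ifs with hu hv
  · exact absurd (allEven_of_add_self_eq_zero (by rcases h with h | h <;> simp [h, hu, hv])) hx
  all_goals simp

theorem beta_le_one_general {n : ℕ} (gj gk gh : Fin n → ZMod 4)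
    (hj : ¬ allEven gj) (hk : ¬ allEven gk) (hh : ¬ allEven gh) :
    beta4 gj gk gh = 0 ∨ beta4 gj gk gh = 1 := by
  have h₁ : alpha4 (gj + gk + gh) + alpha4 (gj + gk - gh) ≤ 1 :=
    alpha4_add_alpha4_le_one hh (.inr (by abel))
  have h₂ : alpha4 (gj + gk + gh) + alpha4 (gj - gk + gh) ≤ 1 :=
    alpha4_add_alpha4_le_one hk (.inr (by abel))
  have h₃ : alpha4 (gj + gk + gh) + alpha4 (gj - gk - gh) ≤ 1 :=
    alpha4_add_alpha4_le_one hj (.inl (by abel))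
  have h₄ : alpha4 (gj + gk - gh) + alpha4 (gj - gk + gh) ≤ 1 :=
    alpha4_add_alpha4_le_one hj (.inl (by abel))
  have h₅ : alpha4 (gj + gk - gh) + alpha4 (gj - gk - gh) ≤ 1 :=
    alpha4_add_alpha4_le_one hk (.inr (by abel))
  have h₆ : alpha4 (gj - gk + gh) + alpha4 (gj - gk - gh) ≤ 1 :=
    alpha4_add_alpha4_le_one hh (.inr (by abel))
  unfold beta4
  omega

/-- Lemma A.1(a): β_{jkh} ∈ {0,1}. -/
theorem beta_le_one {n : ℕ} (gj gk gh : Fin n → ZMod 4)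
    (hj : ¬ allEven gj) (hk : ¬ allEven gk) (hh : ¬ allEven gh)
    (h1 : ∀ c : ZMod 4, gj ≠ c • gk) (h2 : ∀ c : ZMod 4, gk ≠ c • gj)
    (h3 : ∀ c : ZMod 4, gj ≠ c • gh) (h4 : ∀ c : ZMod 4, gh ≠ c • gj)
    (h5 : ∀ c : ZMod 4, gk ≠ c • gh) (h6 : ∀ c : ZMod 4, gh ≠ c • gk) :
    beta4 gj gk gh = 0 ∨ beta4 gj gk gh = 1 :=
  beta_le_one_general gj gk gh hj hk hh
end

section
/- With notation as above, fix g_j and g_k each having an odd entry. If every entry of g_j + g_k (mod 4) is even, then β_{jkh} = 0 for all admissible g_h. Moreover, among any family {g_h} of vectors with odd first-odd-entry equal to 1 and no two being Z_4-multiples of each other, at most two members g_h satisfy β_{jkh} = 1. -/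
open Complex Finset

/-! A nonzero `beta4 a b c` forces `c` to be one of `±(a + b)`, `±(a - b)`. If `a + b` is even, so
is `a - b = (a + b) - 2b`, so a non-even `c` has `beta4 a b c = 0`. In a family where no member
is a multiple of another, each pair `{x, -x}` contributes at most one member (`-x = 3 • x`), so
at most two members have `beta4 = 1`. -/

lemma allEven.neg {n : ℕ} {u : Fin n → ZMod 4} (hu : allEven u) : allEven (-u) := by
  intro i
  have key : ∀ x : ZMod 4, (x = 0 ∨ x = 2) → -x = 0 ∨ -x = 2 := by decide
  exact key _ (hu i)

lemma allEven.sub_of_add {n : ℕ} {u w : Fin n → ZMod 4} (h : allEven (u + w)) :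
    allEven (u - w) := by
  intro i
  have key : ∀ x y : ZMod 4, (x + y = 0 ∨ x + y = 2) → x - y = 0 ∨ x - y = 2 := by decide
  exact key _ _ (h i)

lemma eq_of_beta4_ne_zero {n : ℕ} {a b c : Fin n → ZMod 4} (h : beta4 a b c ≠ 0) :
    c = -(a + b) ∨ c = a + b ∨ c = -(a - b) ∨ c = a - b := by
  simp only [beta4, alpha4, add_eq_zero_iff_eq_neg', sub_eq_zero] at h
  by_contra! hc
  obtain ⟨h₁, h₂, h₃, h₄⟩ := hc
  rw [if_neg h₁, if_neg h₂.symm, if_neg h₃, if_neg h₄.symm] at h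
  exact h rfl

lemma beta4_eq_zero_of_allEven_add {n : ℕ} {a b c : Fin n → ZMod 4} (hab : allEven (a + b))
    (hc : ¬ allEven c) : beta4 a b c = 0 := by
  by_contra hβ
  rcases eq_of_beta4_ne_zero hβ with rfl | rfl | rfl | rfl
  exacts [hc hab.neg, hc hab, hc hab.sub_of_add.neg, hc hab.sub_of_add]

lemma card_inter_pair_neg_le_one {M : Type*} [AddGroup M] [DecidableEq M] {T : Finset M}
    (hT : ∀ g ∈ T, ∀ g' ∈ T, g ≠ g' → g ≠ -g') (x : M) : (T ∩ {x, -x}).card ≤ 1 := by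
  refine card_le_one.mpr fun g hg g' hg' => ?_
  simp only [mem_inter, mem_insert, mem_singleton] at hg hg'
  by_contra hne
  refine hT g hg.1 g' hg'.1 hne ?_
  rcases hg.2 with rfl | rfl <;> rcases hg'.2 with rfl | rfl <;> simp_all

theorem beta_bound_general {n : ℕ} (gj gk : Fin n → ZMod 4) :
    (allEven (gj + gk) →
      ∀ gh : Fin n → ZMod 4, ¬ allEven gh → beta4 gj gk gh = 0) ∧
    (∀ T : Finset (Fin n → ZMod 4), (∀ g ∈ T, inOmega g) →
      (∀ g ∈ T, ∀ g' ∈ T, g ≠ g' → ∀ c : ZMod 4, g ≠ c • g') →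
      (T.filter (fun h => beta4 gj gk h = 1)).card ≤ 2) := by
  refine ⟨fun hs gh hgh => beta4_eq_zero_of_allEven_add hs hgh, fun T _ hmult => ?_⟩
  have hneg : ∀ g ∈ T, ∀ g' ∈ T, g ≠ g' → g ≠ -g' := fun g hg g' hg' hne => by
    simpa using hmult g hg g' hg' hne (-1)
  have hsub : T.filter (fun h => beta4 gj gk h = 1) ⊆
      T ∩ {gj + gk, -(gj + gk)} ∪ T ∩ {gj - gk, -(gj - gk)} := by
    intro h hh
    rw [mem_filter] at hh
    have := eq_of_beta4_ne_zero (hh.2.trans_ne one_ne_zero)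
    simp only [mem_union, mem_inter, mem_insert, mem_singleton]
    tauto
  calc (T.filter (fun h => beta4 gj gk h = 1)).card
      ≤ (T ∩ {gj + gk, -(gj + gk)} ∪ T ∩ {gj - gk, -(gj - gk)}).card := card_le_card hsub
    _ ≤ (T ∩ {gj + gk, -(gj + gk)}).card + (T ∩ {gj - gk, -(gj - gk)}).card :=
      card_union_le _ _
    _ ≤ 1 + 1 :=
      add_le_add (card_inter_pair_neg_le_one hneg _) (card_inter_pair_neg_le_one hneg _)

/-- Lemma A.1(b): if g_j + g_k has all entries even then β_{jkh} = 0 for all admissible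
g_h; moreover among any family of vectors with first odd entry 1, no two of which are
Z₄-multiples of each other, at most two members satisfy β_{jkh} = 1. -/
theorem beta_bound {n : ℕ} (gj gk : Fin n → ZMod 4)
    (hj : ¬ allEven gj) (hk : ¬ allEven gk) :
    (allEven (gj + gk) →
      ∀ gh : Fin n → ZMod 4, ¬ allEven gh → beta4 gj gk gh = 0) ∧
    (∀ T : Finset (Fin n → ZMod 4), (∀ g ∈ T, inOmega g) →
      (∀ g ∈ T, ∀ g' ∈ T, g ≠ g' → ∀ c : ZMod 4, g ≠ c • g') →
      (T.filter (fun h => beta4 gj gk h = 1)).card ≤ 2) :=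
  beta_bound_general gj gk
end

section
/- Let n ≥ 2 and m ≥ 1. There exists a set S̄ of m vectors in (Z_4)^n, each having first odd entry equal to 1, no two of which are Z_4-multiples of each other, such that g + g' has all entries even for every g, g' ∈ S̄, if and only if m ≤ 2^{n-1}. -/
open Complex Finset

/-! Two vectors with even sum have their odd entries in the same positions, so all vectors of an
even set share the position `i₀` of their first odd entry, where all of them equal 1. Each entry
of `g - g₀` is even, so `g` is determined by the set of coordinates where it differs from a fixed
`g₀`, a subset of the `n - 1` coordinates other than `i₀`. Conversely, the `2^{n-1}` vectors with
entries in `{1, 3}` and first entry 1 form an even set of non-multiples. -/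

lemma isOddZ4_of_add_even {a b : ZMod 4} (hab : a + b = 0 ∨ a + b = 2) (ha : isOddZ4 a) :
    isOddZ4 b := by
  revert a b; decide

lemma eq_of_add_even_of_eq_iff {a b c : ZMod 4} (hac : a + c = 0 ∨ a + c = 2)
    (hbc : b + c = 0 ∨ b + c = 2) (h : a = c ↔ b = c) : a = b := by
  revert a b c; decide

lemma ne_smul_of_apply_eq_one {ι R : Type*} [Semiring R] {g g' : ι → R} {i : ι}
    (hg : g i = 1) (hg' : g' i = 1) (hne : g ≠ g') (c : R) : g ≠ c • g' := by
  rintro rfl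
  obtain rfl : c = 1 := by simpa [hg'] using hg
  exact hne (one_smul R g')

/-- The leading odd entries of two vectors with even sum sit at the same position. -/
lemma apply_eq_one_of_allEven_add {n : ℕ} {g g' : Fin n → ZMod 4} (hg : inOmega g)
    (heven : allEven (g + g')) {i : Fin n} (hi : g' i = 1)
    (hi_min : ∀ j < i, ¬ isOddZ4 (g' j)) : g i = 1 := by
  obtain ⟨k, hk, hk_min⟩ := hg
  rcases lt_trichotomy k i with hki | rfl | hik
  · exact absurd (isOddZ4_of_add_even (heven k) (Or.inl hk)) (hi_min k hki)
  · exact hk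
  · have hodd : isOddZ4 (g i) :=
      isOddZ4_of_add_even (by rw [add_comm]; exact heven i) (Or.inl hi)
    exact absurd hodd (hk_min i hik)

lemma card_powerset_univ_erase {n : ℕ} (i : Fin n) :
    ((univ : Finset (Fin n)).erase i).powerset.card = 2 ^ (n - 1) := by
  rw [card_powerset, card_erase_of_mem (mem_univ _), card_univ, Fintype.card_fin]

lemma card_le_of_allEven_add {n : ℕ} (S : Finset (Fin n → ZMod 4))
    (g₀ : Fin n → ZMod 4) (i₀ : Fin n) (hi₀ : ∀ g ∈ S, g i₀ = g₀ i₀)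
    (heven : ∀ g ∈ S, allEven (g + g₀)) : S.card ≤ 2 ^ (n - 1) := by
  let diff : (Fin n → ZMod 4) → Finset (Fin n) := fun g => univ.filter fun j => g j ≠ g₀ j
  have hmaps : ∀ g ∈ S, diff g ∈ (univ.erase i₀).powerset := by
    intro g hg
    simp only [diff, mem_powerset, subset_iff, mem_filter, mem_univ, true_and, mem_erase]
    exact fun j hj => ⟨by rintro rfl; exact hj (hi₀ g hg), trivial⟩
  have hinj : Set.InjOn diff S := by
    intro g hg g' hg' hdiff
    funext j
    have hj : j ∈ diff g ↔ j ∈ diff g' := by rw [hdiff]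
    simp only [diff, mem_filter, mem_univ, true_and, not_iff_not] at hj
    exact eq_of_add_even_of_eq_iff (heven g hg j) (heven g' hg' j) hj
  calc S.card ≤ ((univ : Finset (Fin n)).erase i₀).powerset.card :=
        card_le_card_of_injOn diff hmaps hinj
    _ = 2 ^ (n - 1) := card_powerset_univ_erase i₀

def oddVec {ι : Type*} [DecidableEq ι] (s : Finset ι) : ι → ZMod 4 :=
  fun j => if j ∈ s then 3 else 1

lemma oddVec_injective {ι : Type*} [DecidableEq ι] : Function.Injective (oddVec (ι := ι)) := by
  intro s t hst
  ext j
  have hj := congrFun hst j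
  unfold oddVec at hj
  split_ifs at hj <;> simp_all <;> exact absurd hj (by decide)

lemma allEven_oddVec_add {n : ℕ} (s t : Finset (Fin n)) : allEven (oddVec s + oddVec t) := by
  intro j
  simp only [Pi.add_apply, oddVec]
  split_ifs <;> decide

lemma inOmega_oddVec {n : ℕ} {s : Finset (Fin n)} {i : Fin n} (hi : i.val = 0) (his : i ∉ s) :
    inOmega (oddVec s) :=
  ⟨i, if_neg his, fun j hj => absurd hj (by simp [Fin.lt_def, hi])⟩

theorem even_set_exists_iff_general {n : ℕ} (hn : 2 ≤ n) (m : ℕ) :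
    (∃ Sb : Finset (Fin n → ZMod 4), Sb.card = m ∧ (∀ g ∈ Sb, inOmega g) ∧
      (∀ g ∈ Sb, ∀ g' ∈ Sb, g ≠ g' → ∀ c : ZMod 4, g ≠ c • g') ∧
      (∀ g ∈ Sb, ∀ g' ∈ Sb, allEven (g + g'))) ↔ m ≤ 2 ^ (n - 1) := by
  constructor
  · rintro ⟨Sb, rfl, hΩ, -, heven⟩
    obtain rfl | ⟨g₀, hg₀⟩ := Sb.eq_empty_or_nonempty
    · simp
    obtain ⟨i₀, hi₀, hi₀_min⟩ := hΩ g₀ hg₀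
    have hlead : ∀ g ∈ Sb, g i₀ = g₀ i₀ := fun g hg => by
      rw [hi₀, apply_eq_one_of_allEven_add (hΩ g hg) (heven g hg g₀ hg₀) hi₀ hi₀_min]
    exact card_le_of_allEven_add Sb g₀ i₀ hlead fun g hg => heven g hg g₀ hg₀
  · intro hm
    let i₀ : Fin n := ⟨0, by omega⟩
    obtain ⟨T, hT, rfl⟩ := exists_subset_card_eq ((card_powerset_univ_erase i₀).symm ▸ hm)
    have hT₀ : ∀ s ∈ T, i₀ ∉ s := fun s hs h => by
      simpa using Finset.mem_powerset.mp (hT hs) h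
    refine ⟨T.image oddVec, card_image_of_injective _ oddVec_injective, ?_, ?_, ?_⟩
    · simp only [mem_image]
      rintro _ ⟨s, hs, rfl⟩
      exact inOmega_oddVec rfl (hT₀ s hs)
    · simp only [mem_image]
      rintro _ ⟨s, hs, rfl⟩ _ ⟨t, ht, rfl⟩ hne
      exact ne_smul_of_apply_eq_one (if_neg (hT₀ s hs)) (if_neg (hT₀ t ht)) hne
    · simp only [mem_image]
      rintro _ ⟨s, -, rfl⟩ _ ⟨t, -, rfl⟩
      exact allEven_oddVec_add s t

/-- Lemma 2: an even set S̄ of m vectors (first odd entry 1, pairwise non-multiples)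
exists if and only if m ≤ 2^{n-1}. -/
theorem even_set_exists_iff {n : ℕ} (hn : 2 ≤ n) (m : ℕ) (hm : 1 ≤ m) :
    (∃ Sb : Finset (Fin n → ZMod 4), Sb.card = m ∧ (∀ g ∈ Sb, inOmega g) ∧
      (∀ g ∈ Sb, ∀ g' ∈ Sb, g ≠ g' → ∀ c : ZMod 4, g ≠ c • g') ∧
      (∀ g ∈ Sb, ∀ g' ∈ Sb, allEven (g + g'))) ↔ m ≤ 2 ^ (n - 1) :=
  even_set_exists_iff_general hn m
end

section
/- Suppose S̄ = {g_{s+1}, ..., g_v} is an even subset of Ω (i.e., g_j + g_k has all entries even for all j, k), with |S̄| = v - s. Then Σ_{u ∈ Δ_0} σ̄_u² = 2^{n+2} (v-s)² and Σ_{u ∈ (Z_4)^n} σ̄_u³ = 0, where σ̄_u = Σ_{j=s+1}^{v} (i^{u·g_j} + i^{-u·g_j}) and Δ_0 is the set of vectors in (Z_4)^n with all entries even. -/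
open Complex Finset

/-!
With `ψ = ipow` and `c a = ψ a + ψ (-a)` we have `σ̄_u = ∑_{g ∈ S̄} c (u·g)`.

For `u ∈ Δ₀` the exponent `u·g` is unchanged by `u ↦ -u = u`, so `σ̄_u = 2 ∑_g ψ (u·g)`, and
`ψ (u·g) ψ (u·g') = ψ (u·(g + g')) = 1` because `u` and `g + g'` are both even; hence
`σ̄_u² = 4 |S̄|²` for each of the `2ⁿ` vectors of `Δ₀`.

For the cube, the product-to-sum formula `c a * c b = c (a + b) + c (a - b)` writes
`c (u·g₁) c (u·g₂) c (u·g₃)` as a sum of terms `c (u·(g₁ ± g₂ ± g₃))`. Since `g₁ ± g₂` is even and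
`g₃` has an odd entry, each `g₁ ± g₂ ± g₃` has an odd entry, so `u ↦ ψ (u·w)` is a nontrivial
character of `(ℤ₄)ⁿ` for these `w` and sums to zero over `u`.
-/

lemma ipow_zero : ipow 0 = 1 := by simp [ipow]

lemma ipow_add (a b : ZMod 4) : ipow (a + b) = ipow a * ipow b := by
  rw [ipow, ipow, ipow, ZMod.val_add, ← pow_eq_pow_mod _ Complex.I_pow_four, pow_add]

lemma ipow_ne_one_of_isOddZ4 {a : ZMod 4} (ha : isOddZ4 a) : ipow a ≠ 1 := by
  rcases ha with rfl | rfl <;> intro h <;>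
    simpa [ipow, show (1 : ZMod 4).val = 1 from rfl, show (3 : ZMod 4).val = 3 from rfl, pow_succ]
      using congrArg Complex.im h

section dot4

variable {n : ℕ}

lemma dot4_add_left (u v w : Fin n → ZMod 4) : dot4 (u + v) w = dot4 u w + dot4 v w := by
  simp [dot4, add_mul, sum_add_distrib]

lemma dot4_add (u g g' : Fin n → ZMod 4) : dot4 u (g + g') = dot4 u g + dot4 u g' := by
  simp [dot4, mul_add, sum_add_distrib]

lemma dot4_sub (u g g' : Fin n → ZMod 4) : dot4 u (g - g') = dot4 u g - dot4 u g' := by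
  simp [dot4, mul_sub, sum_sub_distrib]

lemma dot4_neg (u g : Fin n → ZMod 4) : dot4 u (-g) = -dot4 u g := by
  simp [dot4]

lemma dot4_neg_left (u g : Fin n → ZMod 4) : dot4 (-u) g = -dot4 u g := by
  simp [dot4]

lemma dot4_single_left (i : Fin n) (w : Fin n → ZMod 4) : dot4 (Pi.single i 1) w = w i := by
  simp [dot4, Pi.single_apply]

lemma dot4_eq_zero_of_allEven {u w : Fin n → ZMod 4} (hu : allEven u) (hw : allEven w) :
    dot4 u w = 0 :=
  sum_eq_zero fun i _ =>
    (by decide : ∀ a b : ZMod 4, (a = 0 ∨ a = 2) → (b = 0 ∨ b = 2) → a * b = 0) _ _ (hu i) (hw i)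

lemma neg_eq_self_of_allEven {u : Fin n → ZMod 4} (hu : allEven u) : -u = u :=
  funext fun i => (by decide : ∀ a : ZMod 4, (a = 0 ∨ a = 2) → -a = a) _ (hu i)

lemma allEven_sub_of_allEven_add {g g' : Fin n → ZMod 4} (h : allEven (g + g')) :
    allEven (g - g') := fun i =>
  (by decide : ∀ a b : ZMod 4, (a + b = 0 ∨ a + b = 2) → (a - b = 0 ∨ a - b = 2)) _ _ (h i)

lemma card_filter_allEven : #(univ.filter (allEven (n := n))) = 2 ^ n := by
  have : univ.filter (allEven (n := n)) = Fintype.piFinset fun _ => ({0, 2} : Finset (ZMod 4)) := by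
    ext u
    simp [allEven, Fintype.mem_piFinset]
  rw [this, Fintype.card_piFinset, prod_const, card_univ, Fintype.card_fin]
  rfl

end dot4

section characters

variable {n : ℕ}

noncomputable def dotChar (w : Fin n → ZMod 4) : AddChar (Fin n → ZMod 4) ℂ where
  toFun u := ipow (dot4 u w)
  map_zero_eq_one' := by simp [dot4, ipow_zero]
  map_add_eq_mul' u v := by rw [dot4_add_left, ipow_add]

lemma sum_ipow_dot4_eq_zero {w : Fin n → ZMod 4} {i : Fin n} (hw : isOddZ4 (w i)) :
    ∑ u, ipow (dot4 u w) = 0 := by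
  refine AddChar.sum_eq_zero_of_ne_one (ψ := dotChar w) (AddChar.ne_one_iff.2 ⟨Pi.single i 1, ?_⟩)
  change ipow (dot4 (Pi.single i 1) w) ≠ 1
  rw [dot4_single_left]
  exact ipow_ne_one_of_isOddZ4 hw

lemma sum_ipow_dot4_sq_of_allEven {u : Fin n → ZMod 4} (hu : allEven u)
    {s : Finset (Fin n → ZMod 4)} (hs : ∀ g ∈ s, ∀ g' ∈ s, allEven (g + g')) :
    (∑ g ∈ s, ipow (dot4 u g)) ^ 2 = (#s : ℂ) ^ 2 := by
  rw [sq, sum_mul_sum]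
  have hone : ∀ g ∈ s, ∀ g' ∈ s, ipow (dot4 u g) * ipow (dot4 u g') = 1 := fun g hg g' hg' => by
    rw [← ipow_add, ← dot4_add, dot4_eq_zero_of_allEven hu (hs g hg g' hg'), ipow_zero]
  rw [sum_congr rfl fun g hg => sum_congr rfl (hone g hg)]
  simp [sq]

end characters

/-- Equals `2 cos (π a / 2)`. -/
noncomputable def ipowCos (a : ZMod 4) : ℂ := ipow a + ipow (-a)

lemma ipowCos_mul (a b : ZMod 4) : ipowCos a * ipowCos b = ipowCos (a + b) + ipowCos (a - b) := by
  simp only [ipowCos, sub_eq_add_neg, neg_add, neg_neg, ipow_add]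
  ring

section cosSums

variable {n : ℕ}

lemma ipowCos_dot4_of_allEven {u : Fin n → ZMod 4} (hu : allEven u) (g : Fin n → ZMod 4) :
    ipowCos (dot4 u g) = 2 * ipow (dot4 u g) := by
  rw [ipowCos, ← dot4_neg_left, neg_eq_self_of_allEven hu, two_mul]

lemma sum_ipowCos_dot4_eq_zero {w : Fin n → ZMod 4} {i : Fin n} (hw : isOddZ4 (w i)) :
    ∑ u, ipowCos (dot4 u w) = 0 := by
  have hw' : isOddZ4 ((-w) i) := (by decide : ∀ a : ZMod 4, isOddZ4 a → isOddZ4 (-a)) _ hw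
  simp only [ipowCos, sum_add_distrib, ← dot4_neg, sum_ipow_dot4_eq_zero hw,
    sum_ipow_dot4_eq_zero hw', add_zero]

lemma sum_ipowCos_mul_eq_zero {e g : Fin n → ZMod 4} (he : allEven e) {i : Fin n}
    (hg : isOddZ4 (g i)) : ∑ u, ipowCos (dot4 u e) * ipowCos (dot4 u g) = 0 := by
  have hodd : ∀ a b : ZMod 4, a = 0 ∨ a = 2 → isOddZ4 b → isOddZ4 (a + b) ∧ isOddZ4 (a - b) := by
    decide
  obtain ⟨hplus, hminus⟩ := hodd _ _ (he i) hg
  simp only [ipowCos_mul, ← dot4_add, ← dot4_sub, sum_add_distrib]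
  rw [sum_ipowCos_dot4_eq_zero (i := i) hplus, sum_ipowCos_dot4_eq_zero (i := i) hminus, add_zero]

lemma sum_ipowCos_mul_mul_eq_zero {g₁ g₂ g₃ : Fin n → ZMod 4} (h₁₂ : allEven (g₁ + g₂))
    {i : Fin n} (h₃ : isOddZ4 (g₃ i)) :
    ∑ u, ipowCos (dot4 u g₁) * ipowCos (dot4 u g₂) * ipowCos (dot4 u g₃) = 0 := by
  simp only [ipowCos_mul (dot4 _ g₁), add_mul, sum_add_distrib, ← dot4_add, ← dot4_sub]
  rw [sum_ipowCos_mul_eq_zero h₁₂ h₃,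
    sum_ipowCos_mul_eq_zero (allEven_sub_of_allEven_add h₁₂) h₃, add_zero]

end cosSums

lemma sum_pow_three {α β : Type*} [CommSemiring β] (s : Finset α) (f : α → β) :
    (∑ a ∈ s, f a) ^ 3 = ∑ a ∈ s, ∑ b ∈ s, ∑ c ∈ s, f a * f b * f c := by
  rw [pow_succ, sq, sum_mul_sum, sum_mul]
  exact sum_congr rfl fun a _ => by rw [sum_mul]; exact sum_congr rfl fun b _ => mul_sum _ _ _

/-- For an even subset S̄ of Ω, Σ_{u ∈ Δ₀} σ̄_u² = 2^{n+2}(v-s)² and Σ_u σ̄_u³ = 0. -/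
theorem even_set_sums {n : ℕ} (Sb : Finset (Fin n → ZMod 4))
    (hΩ : ∀ g ∈ Sb, inOmega g)
    (heven : ∀ g ∈ Sb, ∀ g' ∈ Sb, allEven (g + g')) :
    (∑ u ∈ Finset.univ.filter (allEven (n := n)),
        (∑ g ∈ Sb, (ipow (dot4 u g) + ipow (-(dot4 u g)))) ^ 2
      = 2 ^ (n + 2) * (Sb.card : ℂ) ^ 2) ∧
    (∑ u : Fin n → ZMod 4,
        (∑ g ∈ Sb, (ipow (dot4 u g) + ipow (-(dot4 u g)))) ^ 3 = 0) := by
  simp only [← ipowCos.eq_1]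
  constructor
  · have hsq : ∀ u ∈ univ.filter (allEven (n := n)),
        (∑ g ∈ Sb, ipowCos (dot4 u g)) ^ 2 = 4 * (#Sb : ℂ) ^ 2 := fun u hu => by
      have hu : allEven u := (mem_filter.1 hu).2
      rw [sum_congr rfl fun g _ => ipowCos_dot4_of_allEven hu g, ← mul_sum, mul_pow,
        sum_ipow_dot4_sq_of_allEven hu heven]
      norm_num
    rw [sum_congr rfl hsq, sum_const, card_filter_allEven, nsmul_eq_mul]
    push_cast
    ring
  · simp only [sum_pow_three]
    rw [sum_comm]
    refine sum_eq_zero fun g₁ hg₁ => ?_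
    rw [sum_comm]
    refine sum_eq_zero fun g₂ hg₂ => ?_
    rw [sum_comm]
    refine sum_eq_zero fun g₃ hg₃ => ?_
    obtain ⟨i, hi, -⟩ := hΩ g₃ hg₃
    exact sum_ipowCos_mul_mul_eq_zero (heven g₁ hg₁ g₂ hg₂) (Or.inl hi)
end

section
/- Let d be a regular two-level fractional factorial design with wordlength pattern A_k(d) generated by a binary matrix B with m columns (m factors, N runs), and let d_0 be the design generated by the matrix [B B] (each column duplicated). Then for every h ≥ 1, A_h(d_0) = Σ_k C(m − k, (h − k)/2) · 2^k · A_k(d), where the sum is over k ∈ {h, h−2, h−4, ...} with k ≥ 0, A_0(d) = 1, and the binomial coefficient is 0 when (h−k)/2 > m − k. -/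
open Finset

/-- The wordlength pattern of a regular two-level design generated by columns `b`:
`wlReg b k` counts the subsets of `k` columns summing to zero over GF(2). -/
def wlReg {ι : Type} [Fintype ι] [DecidableEq ι] {p : ℕ}
    (b : ι → (Fin p → ZMod 2)) (k : ℕ) : ℕ :=
  (Finset.univ.filter (fun T : Finset ι => T.card = k ∧ ∑ j ∈ T, b j = 0)).card

/-! A word of `[B B]` is a pair `(S₁, S₂)` of column sets of `B` with `∑ S₁ + ∑ S₂ = 0`; over
GF(2) this sum is `∑ (S₁ ∆ S₂)`, so `T = S₁ ∆ S₂` is a word of `B`. Given `T`, the pair is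
determined by `S₁ \ S₂ ⊆ T` (`2 ^ #T` choices) and `S₁ ∩ S₂ ⊆ Tᶜ`, and
`#S₁ + #S₂ = #T + 2 * #(S₁ ∩ S₂)` fixes the size of the latter to `(h - #T) / 2`. -/

open scoped symmDiff

namespace Finset

variable {α M : Type*} [DecidableEq α]

theorem sum_add_sum_eq_sum_symmDiff_add_two_nsmul_sum_inter [AddCommMonoid M]
    (f : α → M) (s t : Finset α) :
    ∑ x ∈ s, f x + ∑ x ∈ t, f x = ∑ x ∈ s ∆ t, f x + 2 • ∑ x ∈ s ∩ t, f x := by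
  rw [← sum_union_inter, two_nsmul, ← add_assoc, symmDiff_eq_sup_sdiff_inf]
  exact congrArg (· + _) (sum_sdiff inter_subset_union).symm

theorem card_add_card_eq_card_symmDiff_add_two_mul_card_inter (s t : Finset α) :
    #s + #t = #(s ∆ t) + 2 * #(s ∩ t) := by
  simp only [card_eq_sum_ones]
  rw [← smul_eq_mul]
  exact sum_add_sum_eq_sum_symmDiff_add_two_nsmul_sum_inter (fun _ => 1) s t

theorem sum_add_sum_eq_sum_symmDiff [AddCommMonoid M] [Module (ZMod 2) M]
    (f : α → M) (s t : Finset α) :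
    ∑ x ∈ s, f x + ∑ x ∈ t, f x = ∑ x ∈ s ∆ t, f x := by
  have two_eq_zero : ((2 : ℕ) : ZMod 2) = 0 := rfl
  rw [sum_add_sum_eq_sum_symmDiff_add_two_nsmul_sum_inter, ← Nat.cast_smul_eq_nsmul (ZMod 2) 2,
    two_eq_zero, zero_smul, add_zero]

end Finset

section

variable {ι : Type} [Fintype ι] [DecidableEq ι] {p : ℕ}

theorem wlReg_sumElim (b c : ι → (Fin p → ZMod 2)) (h : ℕ) :
    wlReg (Sum.elim b c) h
      = #{q : Finset ι × Finset ι | #q.1 + #q.2 = h ∧ ∑ j ∈ q.1, b j + ∑ j ∈ q.2, c j = 0} := by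
  refine card_equiv sumEquiv.toEquiv fun s => ?_
  simp [sum_sum_eq_sum_toLeft_add_sum_toRight, card_toLeft_add_card_toRight]

theorem card_filter_symmDiff_eq_and_card_inter_eq (T : Finset ι) (j : ℕ) :
    #{q : Finset ι × Finset ι | q.1 ∆ q.2 = T ∧ #(q.1 ∩ q.2) = j}
      = (Fintype.card ι - #T).choose j * 2 ^ #T := by
  rw [← card_compl, ← card_powersetCard, ← card_powerset, ← card_product]
  refine card_nbij' (fun q => (q.1 ∩ q.2, q.1 \ q.2)) (fun r => (r.1 ∪ r.2, r.1 ∪ (T \ r.2)))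
    ?_ ?_ ?_ ?_ <;> intro q hq <;>
    simp only [mem_coe, mem_filter, mem_univ, true_and, mem_product, mem_powersetCard,
      mem_powerset] at hq ⊢
  · obtain ⟨rfl, rfl⟩ := hq
    refine ⟨⟨fun x => ?_, rfl⟩, fun x => ?_⟩ <;> simp +contextual [mem_symmDiff]
  · obtain ⟨⟨hP, rfl⟩, hA⟩ := hq
    have hPT (x : ι) : x ∈ q.1 → x ∉ T := fun hx => mem_compl.mp (hP hx)
    have hAT (x : ι) : x ∈ q.2 → x ∈ T := fun hx => hA hx
    constructor
    · ext x; simp only [mem_symmDiff, mem_union, mem_sdiff]; grind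
    · congr 1; ext x; simp only [mem_inter, mem_union, mem_sdiff]; grind
  · obtain ⟨rfl, -⟩ := hq
    ext x <;> simp only [mem_union, mem_inter, mem_sdiff, mem_symmDiff] <;> tauto
  · obtain ⟨⟨hP, -⟩, hA⟩ := hq
    have hPT (x : ι) : x ∈ q.1 → x ∉ T := fun hx => mem_compl.mp (hP hx)
    have hAT (x : ι) : x ∈ q.2 → x ∈ T := fun hx => hA hx
    ext x <;> simp only [mem_union, mem_inter, mem_sdiff] <;> grind

theorem card_filter_symmDiff_eq_and_card_add_card_eq {T : Finset ι} {h : ℕ} (hT : #T ≤ h) :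
    #{q : Finset ι × Finset ι | q.1 ∆ q.2 = T ∧ #q.1 + #q.2 = h}
      = if (h - #T) % 2 = 0 then (Fintype.card ι - #T).choose ((h - #T) / 2) * 2 ^ #T
        else 0 := by
  have hcard (q : Finset ι × Finset ι) :=
    card_add_card_eq_card_symmDiff_add_two_mul_card_inter q.1 q.2
  split_ifs with hpar
  · rw [← card_filter_symmDiff_eq_and_card_inter_eq]
    refine congrArg card (filter_congr fun q _ => and_congr_right fun hq => ?_)
    have := hcard q
    rw [hq] at this
    omega
  · refine card_eq_zero.mpr (filter_eq_empty_iff.mpr fun q _ ⟨hq, hh⟩ => hpar ?_)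
    have := hcard q
    rw [hq] at this
    omega

theorem card_filter_card_add_card_eq_and_sum_symmDiff_eq_zero_and_card_symmDiff_eq
    (b : ι → (Fin p → ZMod 2)) {h k : ℕ} (hk : k ≤ h) :
    #{q : Finset ι × Finset ι |
        (#q.1 + #q.2 = h ∧ ∑ j ∈ q.1 ∆ q.2, b j = 0) ∧ #(q.1 ∆ q.2) = k}
      = if (h - k) % 2 = 0 then (Fintype.card ι - k).choose ((h - k) / 2) * 2 ^ k * wlReg b k
        else 0 := by
  rw [card_eq_sum_card_fiberwise (f := fun q => q.1 ∆ q.2)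
    (t := {T : Finset ι | #T = k ∧ ∑ j ∈ T, b j = 0})]
  · calc _ = ∑ T ∈ {T : Finset ι | #T = k ∧ ∑ j ∈ T, b j = 0},
            if (h - k) % 2 = 0 then (Fintype.card ι - k).choose ((h - k) / 2) * 2 ^ k else 0 :=
          sum_congr rfl fun T hT => by
            obtain ⟨rfl, hTb⟩ := (mem_filter.mp hT).2
            rw [← card_filter_symmDiff_eq_and_card_add_card_eq hk, filter_filter]
            refine congrArg card (filter_congr fun q _ => ⟨fun hq => ⟨hq.2, hq.1.1.1⟩, ?_⟩)
            rintro ⟨rfl, hh⟩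
            exact ⟨⟨⟨hh, hTb⟩, rfl⟩, rfl⟩
      _ = _ := by
        rw [sum_const, wlReg, smul_eq_mul]
        split_ifs <;> ring
  · intro q hq
    simp only [coe_filter, mem_univ, true_and, Set.mem_ofPred_eq] at hq ⊢
    exact ⟨hq.2, hq.1.2⟩

theorem wlReg_sumElim_self (b : ι → (Fin p → ZMod 2)) (h : ℕ) :
    wlReg (Sum.elim b b) h
      = ∑ k ∈ range (h + 1),
          if (h - k) % 2 = 0 then (Fintype.card ι - k).choose ((h - k) / 2) * 2 ^ k * wlReg b k
          else 0 := by
  simp_rw [wlReg_sumElim, sum_add_sum_eq_sum_symmDiff]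
  rw [card_eq_sum_card_fiberwise (f := fun q => #(q.1 ∆ q.2)) (t := range (h + 1))]
  · refine sum_congr rfl fun k hk => ?_
    rw [filter_filter, card_filter_card_add_card_eq_and_sum_symmDiff_eq_zero_and_card_symmDiff_eq b
      (Nat.lt_succ_iff.mp (mem_range.mp hk))]
  · intro q hq
    simp only [coe_filter, mem_univ, true_and, Set.mem_ofPred_eq, coe_range, Set.mem_Iio] at hq ⊢
    have := card_add_card_eq_card_symmDiff_add_two_mul_card_inter q.1 q.2
    omega

end

theorem wlp_doubled_columns_general {p m : ℕ} (b : Fin m → (Fin p → ZMod 2)) (h : ℕ) :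
    wlReg (Sum.elim b b : Fin m ⊕ Fin m → (Fin p → ZMod 2)) h
      = ∑ k ∈ Finset.range (h + 1),
          if (h - k) % 2 = 0 then
            Nat.choose (m - k) ((h - k) / 2) * 2 ^ k * wlReg b k
          else 0 := by
  simpa only [Fintype.card_fin] using wlReg_sumElim_self b h

/-- Equation (A.19): A_h([B B]) = Σ_k C(m-k, (h-k)/2) 2^k A_k(B), the sum over
k = h, h-2, h-4, … (k ≥ 0). -/
theorem wlp_doubled_columns {p m : ℕ} (b : Fin m → (Fin p → ZMod 2)) (h : ℕ)
    (hh : 1 ≤ h) :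
    wlReg (Sum.elim b b : Fin m ⊕ Fin m → (Fin p → ZMod 2)) h
      = ∑ k ∈ Finset.range (h + 1),
          if (h - k) % 2 = 0 then
            Nat.choose (m - k) ((h - k) / 2) * 2 ^ k * wlReg b k
          else 0 :=
  wlp_doubled_columns_general b h
end
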